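/- Let r ≥ 1, k ≥ 1, R ∈ ℂ[z] nonzero, P(z) = z^r·R(z^k), Q(z) = z^r·R(z)^k, and n ≥ 1. Then there exists a polynomial R_n ∈ ℂ[z] such that P^{∘n}(z) = z^{r^n}·R_n(z^k) and Q^{∘n}(z) = z^{r^n}·R_n(z)^k; moreover if R(0) ≠ 0 then R_n(0) ≠ 0. -/
import Mathlib


open Polynomial

/-- The `n`-th compositional iterate of a polynomial. -/
noncomputable def polyIter (φ : Polynomial ℂ) (n : ℕ) : Polynomial ℂ :=
  (fun q => φ.comp q)^[n] Polynomial.X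

lemma polyIter_succ (φ : Polynomial ℂ) (n : ℕ) :
    polyIter φ (n + 1) = φ.comp (polyIter φ n) := by
  simp [polyIter, Function.iterate_succ_apply']

/-- Iterates of Ritt-move polynomials: `P^{∘n}(z) = z^{r^n}·R_n(z^k)` and
`Q^{∘n}(z) = z^{r^n}·R_n(z)^k` for some polynomial `R_n`, with `R_n(0) ≠ 0`
whenever `R(0) ≠ 0`. -/
theorem stmt11 (r k : ℕ) (hr : 1 ≤ r) (hk : 1 ≤ k) (R : Polynomial ℂ) (hR : R ≠ 0)
    (n : ℕ) (hn : 1 ≤ n) :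
    ∃ Rn : Polynomial ℂ,
      polyIter (X ^ r * R.comp (X ^ k)) n = X ^ (r ^ n) * Rn.comp (X ^ k) ∧
      polyIter (X ^ r * R ^ k) n = X ^ (r ^ n) * Rn ^ k ∧
      (R.eval 0 ≠ 0 → Rn.eval 0 ≠ 0) := by
  induction n, hn using Nat.le_induction with
  | base =>
    refine ⟨R, ?_, ?_, fun h => h⟩ <;> simp [polyIter]
  | succ n hn ih =>
    obtain ⟨Rn, hP, hQ, h0⟩ := ih
    refine ⟨Rn ^ r * R.comp (X ^ (r ^ n) * Rn ^ k), ?_, ?_, ?_⟩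
    · rw [polyIter_succ, hP]
      have key : (X ^ r ^ n * Rn.comp (X ^ k)) ^ k = (X ^ r ^ n * Rn ^ k).comp (X ^ k) := by
        rw [mul_comp, X_pow_comp, pow_comp, mul_pow, ← pow_mul, ← pow_mul, mul_comm (r ^ n) k]
      rw [mul_comp, X_pow_comp, comp_assoc, X_pow_comp, key, ← comp_assoc, mul_comp, pow_comp, mul_pow,
        ← pow_mul, pow_succ]
      ring
    · rw [polyIter_succ, hQ]
      rw [mul_comp, X_pow_comp, pow_comp, pow_succ]
      ring
    · intro h
      have h0' := h0 h
      simp only [eval_mul, eval_pow, eval_comp, eval_X]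
      have : (0:ℂ) ^ r ^ n = 0 := zero_pow (by positivity)
      simp [this, h0', h, pow_ne_zero]
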